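/- arXiv:1910.03407 — 3 statements merged into one kernel-verified Lean document; each statement's English description precedes it below -/
import Mathlib

section
/- For all real κ, all 0 < ε ≤ R, and all A ≥ 0, the bound |κ ∫_ε^R e^{±iAρ} ρ^{-1+iκ} dρ| ≤ C(1+|κ|)² holds with a constant C independent of κ, ε, R and A. -/
open MeasureTheory Complex intervalIntegral

/-!
Put `ω = s A` and split `[ε, R]` at `δ = max ε |ω|⁻¹` (no split is needed if `|ω| R ≤ 1`).
On `[ε, δ]` write `e^{iωρ} = 1 + O(|ω| ρ)`: the main term integrates exactly, and
`κ ∫ ρ^{-1+iκ} dρ = -i (δ^{iκ} - ε^{iκ})` has modulus at most `2` because the factor `κ` cancels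
the `1/(iκ)` of the antiderivative, while the error term is at most `|κ| |ω| (δ - ε) ≤ |κ|`.
On `[δ, R]` integrate by parts against `e^{iωρ}/(iω)`: every term gains a factor
`1/(|ω| ρ) ≤ 1`, and differentiating `ρ^{-1+iκ}` costs `|-1+iκ| ≤ 1 + |κ|`.
-/

section

variable {a b : ℝ}

lemma norm_ofReal_cpow_I_mul {x : ℝ} (hx : 0 < x) (κ : ℝ) :
    ‖(x : ℂ) ^ (I * κ)‖ = 1 := by
  simp [norm_cpow_eq_rpow_re_of_pos hx]

lemma norm_ofReal_cpow_neg_one_add_I_mul {x : ℝ} (hx : 0 < x) (κ : ℝ) :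
    ‖(x : ℂ) ^ (-1 + I * κ)‖ = x⁻¹ := by
  simp [norm_cpow_eq_rpow_re_of_pos hx, Real.rpow_neg_one]

lemma norm_mul_integral_cpow_neg_one_add_I_mul_le (ha : 0 < a) (hb : 0 < b) (κ : ℝ) :
    ‖(κ : ℂ) * ∫ ρ in a..b, (ρ : ℂ) ^ (-1 + I * κ)‖ ≤ 2 := by
  rcases eq_or_ne κ 0 with rfl | hκ
  · simp
  have hc : (-1 + I * κ : ℂ) ≠ -1 := by simpa using hκ
  rw [integral_cpow (Or.inr ⟨hc, Set.notMem_uIcc_of_lt ha hb⟩), neg_add_cancel_comm,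
    norm_mul, norm_div, norm_mul, norm_I, one_mul, mul_div_cancel₀ _ (by simpa using hκ)]
  calc ‖(b : ℂ) ^ (I * κ) - (a : ℂ) ^ (I * κ)‖
      ≤ ‖(b : ℂ) ^ (I * κ)‖ + ‖(a : ℂ) ^ (I * κ)‖ := norm_sub_le _ _
    _ = 2 := by rw [norm_ofReal_cpow_I_mul hb, norm_ofReal_cpow_I_mul ha]; norm_num

lemma intervalIntegrable_exp_mul_cpow (ha : 0 < a) (hb : 0 < b) (ω : ℝ) (c : ℂ) :
    IntervalIntegrable (fun ρ : ℝ => exp (I * ↑(ω * ρ)) * (ρ : ℂ) ^ c) volume a b :=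
  (intervalIntegrable_cpow (Or.inr (Set.notMem_uIcc_of_lt ha hb))).continuousOn_mul
    (by fun_prop)

lemma norm_integral_exp_sub_one_mul_cpow_le (ha : 0 < a) (hab : a ≤ b) (ω κ : ℝ) :
    ‖∫ ρ in a..b, (exp (I * ↑(ω * ρ)) - 1) * (ρ : ℂ) ^ (-1 + I * κ)‖ ≤ |ω| * (b - a) := by
  have hbound : ∀ x ∈ Set.uIoc a b,
      ‖(exp (I * ↑(ω * x)) - 1) * (x : ℂ) ^ (-1 + I * κ)‖ ≤ |ω| := by
    intro x hx
    have hx0 : 0 < x := ha.trans (Set.uIoc_of_le hab ▸ hx).1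
    rw [norm_mul, norm_ofReal_cpow_neg_one_add_I_mul hx0]
    calc ‖exp (I * ↑(ω * x)) - 1‖ * x⁻¹ ≤ |ω * x| * x⁻¹ := by
          gcongr; exact Real.norm_exp_I_mul_ofReal_sub_one_le
      _ = |ω| := by rw [abs_mul, abs_of_pos hx0, mul_inv_cancel_right₀ hx0.ne']
  simpa [abs_of_nonneg (sub_nonneg.mpr hab)] using norm_integral_le_of_norm_le_const hbound

lemma norm_mul_integral_exp_mul_cpow_le_add (ha : 0 < a) (hab : a ≤ b) (ω κ : ℝ) :
    ‖(κ : ℂ) * ∫ ρ in a..b, exp (I * ↑(ω * ρ)) * (ρ : ℂ) ^ (-1 + I * κ)‖ ≤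
      2 + |κ| * (|ω| * (b - a)) := by
  have hb := ha.trans_le hab
  have hsplit : (∫ ρ in a..b, exp (I * ↑(ω * ρ)) * (ρ : ℂ) ^ (-1 + I * κ)) =
      (∫ ρ in a..b, (ρ : ℂ) ^ (-1 + I * κ)) +
        ∫ ρ in a..b, (exp (I * ↑(ω * ρ)) - 1) * (ρ : ℂ) ^ (-1 + I * κ) := by
    simp only [sub_mul, one_mul]
    rw [integral_sub (intervalIntegrable_exp_mul_cpow ha hb ω _)
      (intervalIntegrable_cpow (Or.inr (Set.notMem_uIcc_of_lt ha hb)))]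
    ring
  rw [hsplit, mul_add]
  refine (norm_add_le _ _).trans
    (add_le_add (norm_mul_integral_cpow_neg_one_add_I_mul_le ha hb κ) ?_)
  rw [norm_mul, norm_real, Real.norm_eq_abs]
  gcongr
  exact norm_integral_exp_sub_one_mul_cpow_le ha hab ω κ

lemma hasDerivAt_exp_I_mul_div {ω : ℝ} (hω : ω ≠ 0) (x : ℝ) :
    HasDerivAt (fun ρ : ℝ => exp (I * ↑(ω * ρ)) / (I * ω)) (exp (I * ↑(ω * x))) x := by
  have h := (((hasDerivAt_id x).ofReal_comp.const_mul (I * ω)).cexp).div_const (I * ω)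
  simp only [id, ofReal_one, mul_one, mul_div_assoc, div_self (mul_ne_zero I_ne_zero
    (ofReal_ne_zero.mpr hω))] at h
  simpa only [ofReal_mul, mul_assoc] using h

lemma integral_rpow_neg_two_le (ha : 0 < a) (hab : a ≤ b) :
    ∫ x in a..b, x ^ (-2 : ℝ) ≤ a⁻¹ := by
  rw [integral_rpow (Or.inr ⟨by norm_num, Set.notMem_uIcc_of_lt ha (ha.trans_le hab)⟩)]
  norm_num [Real.rpow_neg_one]
  rw [div_neg, div_one, neg_sub]
  exact sub_le_self _ (inv_pos.2 (ha.trans_le hab)).le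

lemma norm_integral_mul_cpow_sub_one_mul_le (ha : 0 < a) (hab : a ≤ b) (κ : ℝ) {v : ℝ → ℂ}
    {M : ℝ} (hv : ∀ x, ‖v x‖ ≤ M) :
    ‖∫ x in a..b, (-1 + I * κ) * (x : ℂ) ^ (-1 + I * κ - 1) * v x‖ ≤ (1 + |κ|) * M / a := by
  have hM : 0 ≤ M := (norm_nonneg _).trans (hv 0)
  have hpt : ∀ᵐ x, x ∈ Set.Ioc a b →
      ‖(-1 + I * κ) * (x : ℂ) ^ (-1 + I * κ - 1) * v x‖ ≤ (1 + |κ|) * M * x ^ (-2 : ℝ) :=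
    .of_forall fun x hx => by
      have hre : (-1 + I * κ - 1).re = -2 := by norm_num
      rw [norm_mul, norm_mul, norm_cpow_eq_rpow_re_of_pos (ha.trans hx.1), hre, mul_right_comm]
      gcongr
      · exact Real.rpow_nonneg (ha.trans hx.1).le _
      · exact (norm_add_le _ _).trans (by simp)
      · exact hv x
  calc _ ≤ ∫ x in a..b, (1 + |κ|) * M * x ^ (-2 : ℝ) :=
        norm_integral_le_of_norm_le hab hpt <| (intervalIntegrable_rpow <| Or.inr <|
          Set.notMem_uIcc_of_lt ha (ha.trans_le hab)).const_mul _
    _ ≤ (1 + |κ|) * M * a⁻¹ := by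
        rw [intervalIntegral.integral_const_mul]
        gcongr
        exact integral_rpow_neg_two_le ha hab
    _ = (1 + |κ|) * M / a := (div_eq_mul_inv _ _).symm

lemma norm_integral_exp_mul_cpow_le_div (ha : 0 < a) (hab : a ≤ b) {ω : ℝ} (hω : ω ≠ 0)
    (κ : ℝ) :
    ‖∫ ρ in a..b, exp (I * ↑(ω * ρ)) * (ρ : ℂ) ^ (-1 + I * κ)‖ ≤ (3 + |κ|) / (|ω| * a) := by
  set c : ℂ := -1 + I * κ
  set v : ℝ → ℂ := fun ρ => exp (I * ↑(ω * ρ)) / (I * ω)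
  have h0 := Set.notMem_uIcc_of_lt ha (ha.trans_le hab)
  have hc : c ≠ 0 := fun h => by simpa [c] using congrArg re h
  have hv : ∀ x, ‖v x‖ = |ω|⁻¹ := fun x => by
    simp only [v, norm_div, norm_exp_I_mul_ofReal]; simp
  have hu : ∀ x ∈ Set.uIcc a b,
      HasDerivAt (fun ρ : ℝ => (ρ : ℂ) ^ c) (c * (x : ℂ) ^ (c - 1)) x :=
    fun x hx => hasDerivAt_ofReal_cpow_const (ne_of_mem_of_not_mem hx h0) hc
  have hboundary : ∀ x, a ≤ x → ‖(x : ℂ) ^ c * v x‖ ≤ (|ω| * a)⁻¹ := fun x hx => by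
    rw [norm_mul, norm_ofReal_cpow_neg_one_add_I_mul (ha.trans_le hx), hv, mul_inv, mul_comm]
    gcongr
  rw [integral_congr fun x _ => mul_comm _ _,
    intervalIntegral.integral_mul_deriv_eq_deriv_mul hu
      (fun x _ => hasDerivAt_exp_I_mul_div hω x)
      ((intervalIntegrable_cpow (Or.inr h0)).const_mul c)
      ((by fun_prop : Continuous _).intervalIntegrable _ _)]
  calc _ ≤ ‖(b : ℂ) ^ c * v b‖ + ‖(a : ℂ) ^ c * v a‖ +
        ‖∫ x in a..b, c * (x : ℂ) ^ (c - 1) * v x‖ :=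
        (norm_sub_le _ _).trans (add_le_add_left (norm_sub_le _ _) _)
    _ ≤ (|ω| * a)⁻¹ + (|ω| * a)⁻¹ + (1 + |κ|) * |ω|⁻¹ / a :=
        add_le_add (add_le_add (hboundary b hab) (hboundary a le_rfl))
          (norm_integral_mul_cpow_sub_one_mul_le ha hab κ fun x => (hv x).le)
    _ = (3 + |κ|) / (|ω| * a) := by field_simp; ring

lemma norm_mul_integral_exp_mul_cpow_le_of_one_le_mul (ha : 0 < a) (hab : a ≤ b) {ω : ℝ}
    (hωa : 1 ≤ |ω| * a) (κ : ℝ) :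
    ‖(κ : ℂ) * ∫ ρ in a..b, exp (I * ↑(ω * ρ)) * (ρ : ℂ) ^ (-1 + I * κ)‖ ≤
      |κ| * (3 + |κ|) := by
  have hω : ω ≠ 0 := by rintro rfl; simp at hωa; linarith
  rw [norm_mul, norm_real, Real.norm_eq_abs]
  gcongr
  exact (norm_integral_exp_mul_cpow_le_div ha hab hω κ).trans (div_le_self (by positivity) hωa)

end

/-- For all real `κ`, all `0 < ε ≤ R`, and all `A ≥ 0`, the bound
`|κ ∫_ε^R e^{±iAρ} ρ^{-1+iκ} dρ| ≤ C (1+|κ|)^2` holds with an absolute constant `C`. -/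
theorem weighted_oscillatory_elementary :
    ∃ C : ℝ, 0 < C ∧ ∀ (κ ε R A s : ℝ), 0 < ε → ε ≤ R → 0 ≤ A → (s = 1 ∨ s = -1) →
      ‖(κ : ℂ) * ∫ ρ in ε..R,
          Complex.exp (Complex.I * Complex.ofReal (s * A * ρ)) *
            (ρ : ℂ) ^ ((-1 : ℂ) + Complex.I * (κ : ℂ))‖
        ≤ C * (1 + |κ|) ^ 2 := by
  refine ⟨2, two_pos, fun κ ε R A s hε hεR _ _ => ?_⟩
  set ω := s * A
  rcases le_or_gt (|ω| * R) 1 with hshort | hlong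
  · calc _ ≤ 2 + |κ| * (|ω| * (R - ε)) :=
          norm_mul_integral_exp_mul_cpow_le_add hε hεR ω κ
      _ ≤ 2 + |κ| * 1 := by gcongr; nlinarith [abs_nonneg ω]
      _ ≤ 2 * (1 + |κ|) ^ 2 := by nlinarith [abs_nonneg κ]
  have hω : 0 < |ω| := (abs_nonneg ω).lt_of_ne fun h => by rw [← h] at hlong; linarith
  set δ := max ε |ω|⁻¹
  have hεδ : ε ≤ δ := le_max_left _ _
  have hδR : δ ≤ R := max_le hεR ((inv_le_iff_one_le_mul₀' hω).2 hlong.le)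
  have hnear : |ω| * (δ - ε) ≤ 1 := by
    have : δ - ε ≤ |ω|⁻¹ := by linarith [max_le_add_of_nonneg hε.le (inv_pos.2 hω).le]
    calc _ ≤ |ω| * |ω|⁻¹ := by gcongr
      _ = 1 := mul_inv_cancel₀ hω.ne'
  have hfar : 1 ≤ |ω| * δ := (inv_le_iff_one_le_mul₀' hω).1 (le_max_right _ _)
  have hδ : 0 < δ := hε.trans_le hεδ
  rw [← integral_add_adjacent_intervals (intervalIntegrable_exp_mul_cpow hε hδ _ _)
    (intervalIntegrable_exp_mul_cpow hδ (hδ.trans_le hδR) _ _), mul_add]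
  calc _ ≤ (2 + |κ| * (|ω| * (δ - ε))) + |κ| * (3 + |κ|) :=
        (norm_add_le _ _).trans (add_le_add
          (norm_mul_integral_exp_mul_cpow_le_add hε hεδ ω κ)
          (norm_mul_integral_exp_mul_cpow_le_of_one_le_mul hδ hδR hfar κ))
    _ ≤ (2 + |κ| * 1) + |κ| * (3 + |κ|) := by gcongr
    _ ≤ 2 * (1 + |κ|) ^ 2 := by nlinarith [abs_nonneg κ]
end

section
/- (Necessary condition I). Suppose the frequency-localized orthonormal Strichartz estimate ‖∑_j ν_j |U_φ χ̃₀(|D|) f_j|²‖_{L^{q/2}_t L^{r/2}_x} ≲ ‖ν‖_{ℓ^β} holds for all orthonormal families (f_j)_j in L² and all ν ∈ ℓ^β, where φ is continuously differentiable away from the origin, q,r ∈ [2,∞), and β ≥ 1. Then β ≤ β_{d/2}(q,r), that is, β satisfies σ/β ≥ 1/q + 2σ/r with σ = d/2, i.e. (d/2)/β ≥ 1/q + d/r, equivalently β ≤ (d/2)/(1/q + d/r). -/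
open MeasureTheory Complex
open scoped ENNReal

/-- The mixed space-time norm `‖F‖_{L^p_t L^q_x}`. -/
noncomputable def mixedNorm {α ε : Type*} [MeasurableSpace α] [NormedAddCommGroup ε]
    (μ : Measure α) (p q : ℝ≥0∞) (F : ℝ → α → ε) : ℝ≥0∞ :=
  if p = ∞ then essSup (fun t => eLpNorm (F t) q μ) volume
  else (∫⁻ t : ℝ, (eLpNorm (F t) q μ) ^ p.toReal) ^ (1 / p.toReal)

section Aux

variable {d : ℕ}

/-- axis-parallel half-open box in Euclidean space -/
def cubeSet (d : ℕ) (a b : Fin d → ℝ) : Set (EuclideanSpace ℝ (Fin d)) :=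
  {x | ∀ i, a i ≤ x i ∧ x i < b i}

lemma cubeSet_eq (a b : Fin d → ℝ) :
    cubeSet d a b = (MeasurableEquiv.toLp 2 (Fin d → ℝ)).symm ⁻¹'
      (Set.univ.pi fun i => Set.Ico (a i) (b i)) := by
  ext x
  simp [cubeSet, Set.mem_pi, Set.mem_Ico]

lemma measurableSet_cubeSet (a b : Fin d → ℝ) : MeasurableSet (cubeSet d a b) := by
  rw [cubeSet_eq]
  exact (MeasurableEquiv.toLp 2 (Fin d → ℝ)).symm.measurable
    (MeasurableSet.univ_pi fun i => measurableSet_Ico)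

lemma volume_cubeSet (a b : Fin d → ℝ) :
    volume (cubeSet d a b) = ∏ i, ENNReal.ofReal (b i - a i) := by
  rw [cubeSet_eq,
    (EuclideanSpace.volume_preserving_symm_measurableEquiv_toLp (Fin d)).measure_preimage
      ((MeasurableSet.univ_pi fun i => measurableSet_Ico).nullMeasurableSet)]
  rw [volume_pi_pi]
  simp [Real.volume_Ico]

lemma volume_cubeSet_const (a : Fin d → ℝ) (w : ℝ) :
    volume (cubeSet d a (fun i => a i + w)) = ENNReal.ofReal w ^ d := by
  rw [volume_cubeSet]; simp

lemma norm_le_of_coords {x : EuclideanSpace ℝ (Fin d)} {w : ℝ} (hd : 1 ≤ d)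
    (h : ∀ i, |x i| ≤ w) : ‖x‖ ≤ d * w := by
  have hw : 0 ≤ w := le_trans (abs_nonneg _) (h ⟨0, hd⟩)
  have h2 : ‖x‖ ^ 2 ≤ (d : ℝ) * w ^ 2 := by
    rw [EuclideanSpace.norm_eq, Real.sq_sqrt (by positivity)]
    calc ∑ i, ‖x i‖ ^ 2 ≤ ∑ _i : Fin d, w ^ 2 := by
          apply Finset.sum_le_sum
          intro i _
          have := h i
          rw [Real.norm_eq_abs]
          nlinarith [abs_nonneg (x i)]
      _ = (d : ℝ) * w ^ 2 := by simp [mul_comm]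
  have hd1 : (1:ℝ) ≤ d := by exact_mod_cast hd
  have hX : (0:ℝ) ≤ ‖x‖ := norm_nonneg x
  have h3 : ‖x‖^2 ≤ ((d:ℝ)*w)^2 := by nlinarith [sq_nonneg w]
  calc ‖x‖ = Real.sqrt (‖x‖^2) := by rw [Real.sqrt_sq hX]
    _ ≤ Real.sqrt (((d:ℝ)*w)^2) := Real.sqrt_le_sqrt h3
    _ = (d:ℝ)*w := Real.sqrt_sq (by positivity)

lemma re_helper (s a b : ℝ) :
    (Complex.exp (Complex.I * (s:ℂ)) * (a:ℂ) * (b:ℂ)).re = Real.cos s * a * b := by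
  rw [mul_comm Complex.I]
  simp [Complex.mul_re, Complex.exp_ofReal_mul_I_re]

lemma osc_lower {E : Type*} [MeasurableSpace E] {μ : Measure E} {Q : Set E}
    (hQ : MeasurableSet Q) (hQfin : μ Q < ⊤)
    (θ : E → ℝ) (ψ : E → ℝ) (c c₀ : ℝ) (hc : 0 ≤ c) (hc₀ : 0 ≤ c₀)
    (θ₀ : ℝ)
    (hInt : IntegrableOn (fun ξ => Complex.exp (Complex.I * ((θ ξ : ℝ) : ℂ)) * ((ψ ξ : ℝ) : ℂ) * (c : ℂ)) Q μ)
    (hphase : ∀ ξ ∈ Q, |θ ξ - θ₀| ≤ 1)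
    (hψ : ∀ ξ ∈ Q, c₀ ≤ ψ ξ) :
    (1/2) * c₀ * c * (μ Q).toReal
      ≤ ‖∫ ξ in Q, Complex.exp (Complex.I * ((θ ξ : ℝ) : ℂ)) * ((ψ ξ : ℝ) : ℂ) * (c : ℂ) ∂μ‖ := by
  set z := ∫ ξ in Q, Complex.exp (Complex.I * ((θ ξ : ℝ) : ℂ)) * ((ψ ξ : ℝ) : ℂ) * (c : ℂ) ∂μ with hz
  have key : (Complex.exp (Complex.I * ((-θ₀ : ℝ) : ℂ)) * z).re ≤ ‖z‖ := by
    calc (Complex.exp (Complex.I * ((-θ₀ : ℝ) : ℂ)) * z).re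
        ≤ ‖Complex.exp (Complex.I * ((-θ₀ : ℝ) : ℂ)) * z‖ := Complex.re_le_norm _
      _ = ‖z‖ := by
          rw [norm_mul, mul_comm Complex.I, Complex.norm_exp_ofReal_mul_I, one_mul]
  refine le_trans ?_ key
  have hprod : ∀ ξ, Complex.exp (Complex.I * ((-θ₀ : ℝ) : ℂ)) *
      (Complex.exp (Complex.I * ((θ ξ : ℝ) : ℂ)) * ((ψ ξ : ℝ) : ℂ) * (c : ℂ))
      = Complex.exp (Complex.I * ((θ ξ - θ₀ : ℝ) : ℂ)) * ((ψ ξ : ℝ) : ℂ) * (c : ℂ) := by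
    intro ξ
    rw [show ((θ ξ - θ₀ : ℝ) : ℂ) = ((θ ξ : ℝ) : ℂ) + ((-θ₀ : ℝ) : ℂ) by push_cast; ring]
    rw [mul_add, Complex.exp_add]
    ring
  have hmulz : Complex.exp (Complex.I * ((-θ₀ : ℝ) : ℂ)) * z
      = ∫ ξ in Q, Complex.exp (Complex.I * ((θ ξ - θ₀ : ℝ) : ℂ)) * ((ψ ξ : ℝ) : ℂ) * (c : ℂ) ∂μ := by
    rw [hz, ← integral_const_mul]
    exact integral_congr_ae (Filter.Eventually.of_forall fun ξ => hprod ξ)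
  rw [hmulz]
  have hInt2 : IntegrableOn
      (fun ξ => Complex.exp (Complex.I * ((θ ξ - θ₀ : ℝ) : ℂ)) * ((ψ ξ : ℝ) : ℂ) * (c : ℂ)) Q μ := by
    exact (hInt.const_mul (Complex.exp (Complex.I * ((-θ₀ : ℝ) : ℂ)))).congr
      (Filter.Eventually.of_forall fun ξ => hprod ξ)
  rw [show (∫ ξ in Q, Complex.exp (Complex.I * ((θ ξ - θ₀ : ℝ) : ℂ)) * ((ψ ξ : ℝ) : ℂ) * (c : ℂ) ∂μ).re
      = RCLike.re (∫ ξ in Q, Complex.exp (Complex.I * ((θ ξ - θ₀ : ℝ) : ℂ)) * ((ψ ξ : ℝ) : ℂ) * (c : ℂ) ∂μ) from rfl,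
    ← integral_re hInt2]
  have hre : ∀ ξ ∈ Q, (1/2) * c₀ * c ≤
      (Complex.exp (Complex.I * ((θ ξ - θ₀ : ℝ) : ℂ)) * ((ψ ξ : ℝ) : ℂ) * (c : ℂ)).re := by
    intro ξ hξ
    rw [re_helper]
    have h1 : (1:ℝ)/2 ≤ Real.cos (θ ξ - θ₀) := by
      have := Real.one_sub_sq_div_two_le_cos (x := θ ξ - θ₀)
      have h2 : (θ ξ - θ₀)^2 ≤ 1 := by
        have := hphase ξ hξ
        nlinarith [abs_nonneg (θ ξ - θ₀), _root_.sq_abs (θ ξ - θ₀)]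
      linarith
    have h2 := hψ ξ hξ
    have h3 : 0 ≤ Real.cos (θ ξ - θ₀) := by linarith
    have h4 : (1:ℝ)/2 * c₀ ≤ Real.cos (θ ξ - θ₀) * ψ ξ := mul_le_mul h1 h2 hc₀ h3
    nlinarith [mul_le_mul_of_nonneg_right h4 hc]
  calc (1/2) * c₀ * c * (μ Q).toReal = ∫ _ξ in Q, (1/2) * c₀ * c ∂μ := by
        rw [setIntegral_const, smul_eq_mul, measureReal_def]; ring
    _ ≤ ∫ ξ in Q, RCLike.re (Complex.exp (Complex.I * ((θ ξ - θ₀ : ℝ) : ℂ)) * ((ψ ξ : ℝ) : ℂ) * (c : ℂ)) ∂μ := by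
        refine setIntegral_mono_on (integrableOn_const hQfin.ne) hInt2.re hQ ?_
        intro ξ hξ
        simpa [RCLike.re_to_complex] using hre ξ hξ

lemma mixedNorm_lower {α : Type*} [MeasurableSpace α] (μ : Measure α) (q2 r2 : ℝ)
    (hq2 : 0 < q2) (hr2 : 0 < r2) (F : ℝ → α → ℝ) (hF : ∀ t x, 0 ≤ F t x)
    (T : ℝ) (X : Set α) (hX : MeasurableSet X)
    (κ : ℝ) (hκ : 0 ≤ κ) (hlow : ∀ t ∈ Set.Icc 0 T, ∀ x ∈ X, κ ≤ F t x) :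
    ((ENNReal.ofReal κ * μ X ^ (1/r2)) ^ q2 * ENNReal.ofReal T) ^ (1/q2)
      ≤ mixedNorm μ (ENNReal.ofReal q2) (ENNReal.ofReal r2) F := by
  rw [mixedNorm, if_neg (by simp), ENNReal.toReal_ofReal hq2.le]
  refine ENNReal.rpow_le_rpow ?_ (by positivity)
  have hsnorm : ∀ t ∈ Set.Icc 0 T,
      ENNReal.ofReal κ * μ X ^ (1/r2) ≤ eLpNorm (F t) (ENNReal.ofReal r2) μ := by
    intro t ht
    have h1 : eLpNorm (X.indicator fun _ => κ) (ENNReal.ofReal r2) μ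
        ≤ eLpNorm (F t) (ENNReal.ofReal r2) μ := by
      apply eLpNorm_mono
      intro x
      by_cases hx : x ∈ X
      · rw [Set.indicator_of_mem hx]
        rw [Real.norm_eq_abs, Real.norm_eq_abs, _root_.abs_of_nonneg hκ,
          _root_.abs_of_nonneg (hF t x)]
        exact hlow t ht x hx
      · rw [Set.indicator_of_notMem hx]
        simp [norm_nonneg]
    rw [eLpNorm_indicator_const hX (by simp [hr2]) (by simp)] at h1
    rw [ENNReal.toReal_ofReal hr2.le] at h1
    refine le_trans (le_of_eq ?_) h1
    congr 1
    rw [← ofReal_norm, Real.norm_eq_abs, _root_.abs_of_nonneg hκ]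
  calc (ENNReal.ofReal κ * μ X ^ (1/r2)) ^ q2 * ENNReal.ofReal T
      = ∫⁻ t, (Set.Icc (0:ℝ) T).indicator
          (fun _ => (ENNReal.ofReal κ * μ X ^ (1/r2)) ^ q2) t := by
        rw [lintegral_indicator measurableSet_Icc, setLIntegral_const, Real.volume_Icc, sub_zero]
    _ ≤ ∫⁻ t, (eLpNorm (F t) (ENNReal.ofReal r2) μ) ^ q2 := by
        apply lintegral_mono
        intro t
        by_cases ht : t ∈ Set.Icc (0:ℝ) T
        · rw [Set.indicator_of_mem ht]
          exact ENNReal.rpow_le_rpow (hsnorm t ht) hq2.le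
        · rw [Set.indicator_of_notMem ht]
          exact zero_le

end Aux

set_option maxHeartbeats 2000000 in
/-- Necessary condition I: if the frequency-localized orthonormal Strichartz estimate
`‖∑_j ν_j |U_φ χ̃₀(|D|) f_j|²‖_{L^{q/2}_t L^{r/2}_x} ≤ C ‖ν‖_{ℓ^β}` holds for all
orthonormal families in `L²` (written on the frequency side, where `U_φ χ̃₀(|D|)` acts
on a frequency profile `g` by `(t,x) ↦ ∫ e^{i(x·ξ + tφ(ξ))} χ̃₀(|ξ|) g(ξ) dξ`), with
`φ` continuously differentiable away from the origin, then `β ≤ β_{d/2}(q,r)`, i.e.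
`1/q + d/r ≤ (d/2)/β`. -/
theorem orthonormal_strichartz_necessary_condition_I (d : ℕ) (hd : 1 ≤ d)
    (q r β : ℝ) (hq : 2 ≤ q) (hr : 2 ≤ r) (hβ : 1 ≤ β)
    (φ : EuclideanSpace ℝ (Fin d) → ℝ)
    (hφ : ∀ ξ : EuclideanSpace ℝ (Fin d), ξ ≠ 0 → ContDiffAt ℝ 1 φ ξ)
    (χ : ℝ → ℝ) (hχ : ContDiff ℝ (⊤ : ℕ∞) χ) (hχsupp : tsupport χ ⊆ Set.Ioo (4⁻¹ : ℝ) 4)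
    (c₀ : ℝ) (hc₀ : 0 < c₀) (hχlow : ∀ ρ ∈ Set.Ioo (2⁻¹ : ℝ) 2, c₀ ≤ χ ρ)
    (C : ℝ)
    (hest : ∀ g : ℕ → EuclideanSpace ℝ (Fin d) → ℂ,
      (∀ j, MemLp (g j) 2 (volume : Measure (EuclideanSpace ℝ (Fin d)))) →
      (∀ j k, (∫ ξ : EuclideanSpace ℝ (Fin d), (starRingEnd ℂ) (g j ξ) * g k ξ)
          = if j = k then 1 else 0) →
      ∀ ν : ℕ → ℝ, Summable (fun j => |ν j| ^ β) →
        mixedNorm volume (ENNReal.ofReal (q / 2)) (ENNReal.ofReal (r / 2))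
            (fun t x => ∑' j, ν j *
              ‖∫ ξ : EuclideanSpace ℝ (Fin d),
                  Complex.exp (Complex.I * Complex.ofReal ((inner ℝ x ξ : ℝ) + t * φ ξ)) *
                    (χ ‖ξ‖ : ℂ) * g j ξ‖ ^ 2)
          ≤ ENNReal.ofReal (C * (∑' j, |ν j| ^ β) ^ (1 / β))) :
    1 / q + d / r ≤ d / (2 * β) := by
  by_contra hcon
  push_neg at hcon
  -- basic positivity facts
  have hq0 : (0:ℝ) < q := by linarith
  have hr0 : (0:ℝ) < r := by linarith
  have hβ0 : (0:ℝ) < β := by linarith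
  have hd0 : (0:ℝ) < d := by exact_mod_cast hd
  have hd1 : (1:ℝ) ≤ d := by exact_mod_cast hd
  -- the base point on the unit sphere
  set i₀ : Fin d := ⟨0, hd⟩ with hi₀
  set ξ₀ : EuclideanSpace ℝ (Fin d) := EuclideanSpace.single i₀ (1:ℝ) with hξ₀
  have hξ₀norm : ‖ξ₀‖ = 1 := by
    rw [hξ₀, EuclideanSpace.norm_single, norm_one]
  have hξ₀ne : ξ₀ ≠ 0 := by
    intro h; rw [h] at hξ₀norm; simp at hξ₀norm
  obtain ⟨K, s, hs, hK⟩ := (hφ ξ₀ hξ₀ne).exists_lipschitzOnWith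
  obtain ⟨δ, hδpos, hδball⟩ := Metric.mem_nhds_iff.mp hs
  set δ' : ℝ := min (δ/2) (4⁻¹) with hδ'def
  have hδ'pos : 0 < δ' := by
    apply lt_min (by linarith) (by norm_num)
  have hδ'le : δ' ≤ 4⁻¹ := min_le_right _ _
  have hball : Metric.closedBall ξ₀ δ' ⊆ s := by
    refine subset_trans ?_ hδball
    intro y hy
    rw [Metric.mem_closedBall] at hy
    rw [Metric.mem_ball]
    calc dist y ξ₀ ≤ δ' := hy
      _ ≤ δ/2 := min_le_left _ _
      _ < δ := by linarith
  -- norms in the closed ball are in (1/2, 2)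
  have hnorm_ball : ∀ ξ ∈ Metric.closedBall ξ₀ δ', ‖ξ‖ ∈ Set.Ioo (2⁻¹:ℝ) 2 := by
    intro ξ hξ
    rw [Metric.mem_closedBall, dist_eq_norm] at hξ
    have h1 : |‖ξ‖ - ‖ξ₀‖| ≤ ‖ξ - ξ₀‖ := abs_norm_sub_norm_le _ _
    rw [hξ₀norm] at h1
    have h2 : |‖ξ‖ - 1| ≤ 4⁻¹ := le_trans (le_trans h1 hξ) hδ'le
    rw [abs_le] at h2
    constructor <;> [linarith [h2.1]; linarith [h2.2]]
  -- parameters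
  set ρ : ℝ := δ' / (2 * d^2) with hρdef
  have hρpos : 0 < ρ := by positivity
  set a : ℝ := (2 * d^2 * (1 + (K:ℝ)))⁻¹ with hadef
  have hKnn : (0:ℝ) ≤ K := K.coe_nonneg
  have hapos : 0 < a := by positivity
  set b : ℝ := a / d with hbdef
  have hbpos : 0 < b := by positivity
  set α : ℝ := 2/q + 2*d/r with hαdef
  set γ : ℝ := d/β with hγdef
  have hαγ : γ < α := by
    rw [hαdef, hγdef]
    have : (d:ℝ)/β = 2 * (d / (2*β)) := by field_simp
    rw [this]
    have h2 : 2 * (d/(2*β)) < 2 * (1/q + d/r) := by linarith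
    calc 2 * ((d:ℝ)/(2*β)) < 2 * (1/q + d/r) := h2
      _ = 2/q + 2*d/r := by ring
  set κ : ℝ := c₀^2/4 * (ρ/2)^d with hκdef
  have hκpos : 0 < κ := by positivity
  -- the enumeration of the lattice
  haveI : Nonempty (Fin d) := ⟨i₀⟩
  haveI : Infinite (Fin d → ℤ) := by infer_instance
  haveI : Denumerable (Fin d → ℤ) := Denumerable.ofEncodableOfInfinite _
  set e : ℕ ≃ (Fin d → ℤ) := (Denumerable.eqv (Fin d → ℤ)).symm with hedef
  -- main per-n estimate
  have main : ∀ n : ℕ, max 1 (max (2*d/δ') (2/ρ)) ≤ (n:ℝ) →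
      κ * (b*n)^α ≤ C * (ρ*n)^γ := by
    intro n hn
    have hn1 : (1:ℝ) ≤ n := le_trans (le_max_left _ _) hn
    have hn0 : (0:ℝ) < n := by linarith
    have hnne : (n:ℝ) ≠ 0 := ne_of_gt hn0
    have hn2 : 2*d/δ' ≤ n := le_trans (le_trans (le_max_left _ _) (le_max_right _ _)) hn
    have hn3 : 2/ρ ≤ n := le_trans (le_trans (le_max_right _ _) (le_max_right _ _)) hn
    have hρn2 : 2 ≤ ρ * n := by
      rw [div_le_iff₀ hρpos] at hn3; linarith
    set m : ℕ := ⌊ρ * n⌋₊ with hmdef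
    have hm_le : (m:ℝ) ≤ ρ * n := Nat.floor_le (by positivity)
    have hm_ge : ρ * n / 2 ≤ (m:ℝ) := by
      have := Nat.sub_one_lt_floor (ρ*n)
      rw [← hmdef] at this
      linarith
    have hm1 : 1 ≤ m := Nat.le_floor (by push_cast; linarith)
    set cn : ℝ := Real.sqrt ((n:ℝ)^d) with hcndef
    have hcn_pos : 0 < cn := Real.sqrt_pos.mpr (by positivity)
    have hcn_sq : cn^2 = (n:ℝ)^d := Real.sq_sqrt (by positivity)
    set Q : (Fin d → ℤ) → Set (EuclideanSpace ℝ (Fin d)) :=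
      fun k => cubeSet d (fun i => (k i : ℝ)/n) (fun i => (k i : ℝ)/n + 1/n) with hQdef
    have hQmeas : ∀ k, MeasurableSet (Q k) := fun k => measurableSet_cubeSet _ _
    have hQvol : ∀ k, volume (Q k) = ENNReal.ofReal (1/(n:ℝ)) ^ d :=
      fun k => volume_cubeSet_const _ _
    have hQvol_ne_top : ∀ k, volume (Q k) ≠ ⊤ := by
      intro k; rw [hQvol]; exact ENNReal.pow_ne_top ENNReal.ofReal_ne_top
    have hQvolR : ∀ k, (volume (Q k)).toReal = (1/(n:ℝ))^d := by
      intro k; rw [hQvol, ENNReal.toReal_pow, ENNReal.toReal_ofReal (by positivity)]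
    have hQmem : ∀ k ξ, ξ ∈ Q k ↔ ∀ i, (k i : ℝ)/n ≤ ξ i ∧ ξ i < (k i : ℝ)/n + 1/n := by
      intro k ξ; rfl
    have hQdisj : ∀ k l : Fin d → ℤ, k ≠ l → ∀ ξ, ξ ∈ Q k → ξ ∈ Q l → False := by
      intro k l hkl ξ hk hl
      obtain ⟨i, hi⟩ := Function.ne_iff.mp hkl
      apply hi
      have h1 := (hQmem k ξ).mp hk i
      have h2 := (hQmem l ξ).mp hl i
      have e1 : ⌊ξ i * n⌋ = k i := by
        rw [Int.floor_eq_iff]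
        constructor
        · rw [div_le_iff₀ hn0] at h1; exact h1.1
        · have := h1.2
          rw [← add_div] at this
          rw [show ((k i : ℝ) + 1) = ((k i : ℤ) : ℝ) + 1 by push_cast; ring] at this
          calc ξ i * n < (((k i : ℤ) : ℝ) + 1) := by
                rw [lt_div_iff₀ hn0] at this; exact this
            _ = (k i : ℝ) + 1 := by push_cast; ring
      have e2 : ⌊ξ i * n⌋ = l i := by
        rw [Int.floor_eq_iff]
        constructor
        · rw [div_le_iff₀ hn0] at h2; exact h2.1
        · have := h2.2
          rw [← add_div] at this
          calc ξ i * n < ((l i : ℝ) + 1) := by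
                rw [lt_div_iff₀ hn0] at this; exact_mod_cast this
            _ = (l i : ℝ) + 1 := by push_cast; ring
      rw [← e1, ← e2]
    set g : ℕ → EuclideanSpace ℝ (Fin d) → ℂ :=
      fun j => (Q (e j)).indicator (fun _ => (cn:ℂ)) with hgdef
    have hgmem : ∀ j, MemLp (g j) 2 volume :=
      fun j => memLp_indicator_const 2 (hQmeas _) _ (Or.inr (hQvol_ne_top _))
    have horth : ∀ j k, (∫ ξ : EuclideanSpace ℝ (Fin d), (starRingEnd ℂ) (g j ξ) * g k ξ)
        = if j = k then 1 else 0 := by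
      intro j k
      by_cases hjk : j = k
      · subst hjk
        rw [if_pos rfl]
        have heq : (fun ξ => (starRingEnd ℂ) (g j ξ) * g j ξ)
            = (Q (e j)).indicator (fun _ => (((cn^2 : ℝ)) : ℂ)) := by
          funext ξ
          by_cases hξ : ξ ∈ Q (e j)
          · simp only [hgdef, Set.indicator_of_mem hξ, Complex.conj_ofReal]
            push_cast; ring
          · simp [hgdef, Set.indicator_of_notMem hξ]
        rw [heq, integral_indicator_const _ (hQmeas _), measureReal_def, hQvolR, Complex.real_smul,
          ← Complex.ofReal_mul,
          show ((1/(n:ℝ))^d * cn^2 : ℝ) = 1 by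
            rw [hcn_sq, one_div, inv_pow, inv_mul_cancel₀ (pow_ne_zero _ hnne)],
          Complex.ofReal_one]
      · rw [if_neg hjk]
        have heq : (fun ξ => (starRingEnd ℂ) (g j ξ) * g k ξ)
            = fun _ => (0:ℂ) := by
          funext ξ
          by_cases h1 : ξ ∈ Q (e j)
          · have h2 : ξ ∉ Q (e k) := fun h2 =>
              hQdisj (e j) (e k) (fun he => hjk (e.injective he)) ξ h1 h2
            simp [hgdef, Set.indicator_of_notMem h2]
          · simp [hgdef, Set.indicator_of_notMem h1]
        rw [heq, integral_zero]
    -- the finite set of good lattice points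
    set cvec : Fin d → ℤ := fun i => if i = i₀ then (n:ℤ) else 0 with hcvecdef
    set S : Finset (Fin d → ℤ) :=
      Fintype.piFinset (fun i => Finset.Ico (cvec i) (cvec i + (m:ℤ))) with hSdef
    have hScard : S.card = m^d := by
      rw [hSdef, Fintype.card_piFinset]
      simp [Int.card_Ico]
    have hξ₀i : ∀ i, ξ₀ i = ((cvec i : ℝ))/n := by
      intro i
      rw [hξ₀, EuclideanSpace.single_apply, hcvecdef]
      by_cases h : i = i₀ <;> simp [h, div_self hnne]
    have hQsub : ∀ k ∈ S, Q k ⊆ Metric.closedBall ξ₀ δ' := by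
      intro k hk ξ hξ
      rw [Metric.mem_closedBall, dist_eq_norm]
      have hcoord : ∀ i, |(ξ - ξ₀) i| ≤ ((m:ℝ)+1)/n := by
        intro i
        have h1 := (hQmem k ξ).mp hξ i
        have h2 := Fintype.mem_piFinset.mp hk i
        rw [Finset.mem_Ico] at h2
        have hc1 : ((cvec i : ℤ):ℝ) ≤ ((k i : ℤ):ℝ) := by exact_mod_cast h2.1
        have hc2 : ((k i : ℤ):ℝ) + 1 ≤ ((cvec i : ℤ):ℝ) + m := by
          have h3 := Int.lt_iff_add_one_le.mp h2.2
          have h4 : ((k i + 1 : ℤ) : ℝ) ≤ ((cvec i + (m:ℤ) : ℤ) : ℝ) := by exact_mod_cast h3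
          push_cast at h4 ⊢
          linarith
        have hsub : (ξ - ξ₀) i = ξ i - ((cvec i : ℝ))/n := by
          rw [show (ξ - ξ₀) i = ξ i - ξ₀ i from rfl, hξ₀i]
        rw [hsub, abs_le]
        have hlow2 : ((cvec i : ℝ))/n ≤ ξ i := by
          refine le_trans ?_ h1.1
          gcongr
        have hhigh2 : ξ i - ((cvec i : ℝ))/n ≤ ((m:ℝ)+1)/n := by
          have h7 : ξ i < (((k i : ℝ)) + 1)/n := by
            rw [add_div]; exact h1.2
          have h8 : (((k i : ℝ)) + 1)/n - ((cvec i : ℝ))/n = (((k i : ℝ)) + 1 - cvec i)/n :=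
            div_sub_div_same _ _ _
          have h9 : (((k i : ℝ)) + 1 - cvec i)/n ≤ ((m:ℝ)+1)/n := by
            gcongr
            linarith
          linarith
        constructor
        · have hpos : (0:ℝ) ≤ ((m:ℝ)+1)/n := by positivity
          linarith
        · linarith
      have hnc := norm_le_of_coords hd hcoord
      have h3 : (d:ℝ)*ρ ≤ δ'/2 := by
        rw [hρdef, mul_div_assoc', div_le_div_iff₀ (by positivity) (by norm_num : (0:ℝ) < 2)]
        nlinarith [mul_nonneg (mul_nonneg hd0.le hδ'pos.le) (sub_nonneg.mpr hd1)]
      have h4 : (d:ℝ)/n ≤ δ'/2 := by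
        rw [div_le_div_iff₀ hn0 (by norm_num : (0:ℝ) < 2)]
        rw [div_le_iff₀ hδ'pos] at hn2
        linarith
      calc ‖ξ - ξ₀‖ ≤ d * (((m:ℝ)+1)/n) := hnc
        _ = ((d:ℝ)*((m:ℝ)+1))/n := by ring
        _ ≤ ((d:ℝ)*(ρ*n+1))/n := by
            have hmρ : (m:ℝ) + 1 ≤ ρ*n + 1 := by linarith
            gcongr
        _ = (d:ℝ)*ρ + d/n := by field_simp
        _ ≤ δ' := by linarith
    -- centers
    set v : (Fin d → ℤ) → EuclideanSpace ℝ (Fin d) :=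
      fun k => (EuclideanSpace.equiv (Fin d) ℝ).symm (fun i => (k i : ℝ)/n) with hvdef
    have hv_apply : ∀ k i, v k i = (k i : ℝ)/n := fun k i => rfl
    have hv_mem : ∀ k, v k ∈ Q k := by
      intro k
      rw [hQmem]
      intro i
      rw [hv_apply]
      have : (0:ℝ) < 1/n := by positivity
      exact ⟨le_refl _, by linarith⟩
    have hdiff : ∀ k, ∀ ξ ∈ Q k, ‖ξ - v k‖ ≤ d * (1/n) := by
      intro k ξ hξ
      apply norm_le_of_coords hd
      intro i
      have h1 := (hQmem k ξ).mp hξ i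
      have hs2 : (ξ - v k) i = ξ i - ((k i : ℝ))/n := by
        rw [show (ξ - v k) i = ξ i - v k i from rfl, hv_apply]
      rw [hs2, abs_le]
      have : (0:ℝ) < 1/n := by positivity
      constructor
      · linarith [h1.1]
      · linarith [h1.2]
    -- χ is bounded
    obtain ⟨B, hB⟩ : ∃ B : ℝ, ∀ y : ℝ, ‖χ y‖ ≤ B := by
      have hcs : HasCompactSupport χ := by
        apply HasCompactSupport.intro (isCompact_Icc (a := (4:ℝ)⁻¹) (b := 4))
        intro x hx
        exact image_eq_zero_of_notMem_tsupport
          (fun hmem => hx (Set.Ioo_subset_Icc_self (hχsupp hmem)))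
      exact hcs.exists_bound_of_continuous hχ.continuous
    -- the space cube
    set X : Set (EuclideanSpace ℝ (Fin d)) :=
      cubeSet d (fun _ => 0) (fun _ => b*n) with hXdef
    have hXmeas : MeasurableSet X := measurableSet_cubeSet _ _
    have hXvol : volume X = ENNReal.ofReal (b*n) ^ d := by
      rw [hXdef, volume_cubeSet]
      simp [Finset.prod_const]
    have hxnorm : ∀ x ∈ X, ‖x‖ ≤ a * n := by
      intro x hx
      have h1 : ∀ i, |x i| ≤ b*n := by
        intro i
        have h0 : (0:ℝ) ≤ x i ∧ x i < b*n := hx i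
        rw [abs_le]
        constructor <;> [linarith [h0.1]; linarith [h0.2]]
      have h2 := norm_le_of_coords hd h1
      have h3 : (d:ℝ) * (b*n) = a * n := by
        rw [hbdef]
        field_simp
      linarith
    -- the key packet lower bound
    have hA : ∀ t ∈ Set.Icc (0:ℝ) (a*n), ∀ x ∈ X, ∀ j : ℕ, e j ∈ S →
        c₀^2/4 * (1/(n:ℝ))^d ≤ ‖∫ ξ : EuclideanSpace ℝ (Fin d),
          Complex.exp (Complex.I * Complex.ofReal ((inner ℝ x ξ : ℝ) + t * φ ξ)) *
            (χ ‖ξ‖ : ℂ) * g j ξ‖ ^ 2 := by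
      intro t ht x hx j hj
      set k := e j with hkdef
      set θ : EuclideanSpace ℝ (Fin d) → ℝ := fun ξ => (inner ℝ x ξ : ℝ) + t * φ ξ with hθdef
      have hrepr : (fun ξ : EuclideanSpace ℝ (Fin d) =>
          Complex.exp (Complex.I * Complex.ofReal (θ ξ)) * (χ ‖ξ‖ : ℂ) * g j ξ)
          = (Q k).indicator (fun ξ =>
            Complex.exp (Complex.I * ((θ ξ : ℝ) : ℂ)) * ((χ ‖ξ‖ : ℝ) : ℂ) * (cn : ℂ)) := by
        funext ξ
        by_cases hξ : ξ ∈ Q k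
        · rw [Set.indicator_of_mem hξ]
          simp [hgdef, ← hkdef, Set.indicator_of_mem hξ]
        · rw [Set.indicator_of_notMem hξ]
          simp [hgdef, ← hkdef, Set.indicator_of_notMem hξ]
      have hQsubball := hQsub k hj
      have hφcont : ContinuousOn φ (Q k) :=
        (hK.continuousOn).mono (subset_trans hQsubball hball)
      have hθcont : ContinuousOn θ (Q k) := by
        apply ContinuousOn.add
        · exact (Continuous.inner continuous_const continuous_id).continuousOn
        · exact continuousOn_const.mul hφcont
      have haesm : AEStronglyMeasurable (fun ξ : EuclideanSpace ℝ (Fin d) =>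
          Complex.exp (Complex.I * ((θ ξ : ℝ) : ℂ)) * ((χ ‖ξ‖ : ℝ) : ℂ) * (cn : ℂ))
          (volume.restrict (Q k)) := by
        apply ContinuousOn.aestronglyMeasurable _ (hQmeas k)
        apply ContinuousOn.mul
        · apply ContinuousOn.mul
          · exact Complex.continuous_exp.comp_continuousOn
              (continuousOn_const.mul (Complex.continuous_ofReal.comp_continuousOn hθcont))
          · exact ((Complex.continuous_ofReal.comp (hχ.continuous.comp continuous_norm))).continuousOn
        · exact continuousOn_const
      have hbdd : ∀ ξ : EuclideanSpace ℝ (Fin d),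
          ‖Complex.exp (Complex.I * ((θ ξ : ℝ) : ℂ)) * ((χ ‖ξ‖ : ℝ) : ℂ) * (cn : ℂ)‖ ≤ B * cn := by
        intro ξ
        rw [norm_mul, norm_mul]
        have he1 : ‖Complex.exp (Complex.I * ((θ ξ : ℝ) : ℂ))‖ = 1 := by
          rw [mul_comm]
          exact Complex.norm_exp_ofReal_mul_I _
        rw [he1, one_mul, Complex.norm_real, Complex.norm_real]
        have := hB ‖ξ‖
        have hcnn : ‖(cn:ℝ)‖ = cn := by rw [Real.norm_eq_abs, _root_.abs_of_nonneg hcn_pos.le]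
        rw [hcnn]
        exact mul_le_mul_of_nonneg_right this hcn_pos.le
      have hInt : IntegrableOn (fun ξ : EuclideanSpace ℝ (Fin d) =>
          Complex.exp (Complex.I * ((θ ξ : ℝ) : ℂ)) * ((χ ‖ξ‖ : ℝ) : ℂ) * (cn : ℂ)) (Q k) volume :=
        ⟨haesm, HasFiniteIntegral.restrict_of_bounded _ ((hQvol_ne_top k).lt_top) (ae_of_all _ hbdd)⟩
      -- phase control
      have hphase : ∀ ξ ∈ Q k, |θ ξ - ((inner ℝ x (v k) : ℝ) + t * φ (v k))| ≤ 1 := by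
        intro ξ hξ
        have hsplit : θ ξ - ((inner ℝ x (v k) : ℝ) + t * φ (v k))
            = (inner ℝ x (ξ - v k) : ℝ) + t * (φ ξ - φ (v k)) := by
          rw [hθdef, inner_sub_right]
          ring
        rw [hsplit]
        have h1 : |(inner ℝ x (ξ - v k) : ℝ)| ≤ ‖x‖ * ‖ξ - v k‖ := abs_real_inner_le_norm _ _
        have h2 : |φ ξ - φ (v k)| ≤ (K:ℝ) * ‖ξ - v k‖ := by
          have := hK.dist_le_mul ξ (hball (hQsubball hξ)) (v k) (hball (hQsubball (hv_mem k)))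
          rw [Real.dist_eq, dist_eq_norm] at this
          exact this
        have h3 := hdiff k ξ hξ
        have hxn := hxnorm x hx
        have htn : |t| ≤ a*n := by
          rw [abs_le]
          exact ⟨by linarith [ht.1, mul_pos hapos hn0], ht.2⟩
        have hvk : ‖ξ - v k‖ ≥ 0 := norm_nonneg _
        have hb1 : |(inner ℝ x (ξ - v k) : ℝ)| ≤ (a*n) * ((d:ℝ)*(1/n)) :=
          le_trans h1 (mul_le_mul hxn h3 hvk (by positivity))
        have hb2 : |t * (φ ξ - φ (v k))| ≤ (a*n) * ((K:ℝ)*((d:ℝ)*(1/n))) := by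
          rw [abs_mul]
          apply mul_le_mul htn (le_trans h2 ?_) (abs_nonneg _) (by positivity)
          exact mul_le_mul_of_nonneg_left h3 K.coe_nonneg
        have hcalc : (a*n) * ((d:ℝ)*(1/n)) + (a*n) * ((K:ℝ)*((d:ℝ)*(1/n)))
            = a * d * (1 + (K:ℝ)) := by
          field_simp
        have hfin : a * (d:ℝ) * (1 + (K:ℝ)) ≤ 1 := by
          have heq2 : a * (d:ℝ) * (1 + (K:ℝ)) = (2*(d:ℝ))⁻¹ := by
            rw [hadef]
            field_simp
          rw [heq2]
          rw [inv_le_one_iff₀]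
          right
          linarith
        calc |(inner ℝ x (ξ - v k) : ℝ) + t * (φ ξ - φ (v k))|
            ≤ |(inner ℝ x (ξ - v k) : ℝ)| + |t * (φ ξ - φ (v k))| := abs_add_le _ _
          _ ≤ (a*n) * ((d:ℝ)*(1/n)) + (a*n) * ((K:ℝ)*((d:ℝ)*(1/n))) := add_le_add hb1 hb2
          _ = a * d * (1 + (K:ℝ)) := hcalc
          _ ≤ 1 := hfin
      have hosc := osc_lower (hQmeas k) ((hQvol_ne_top k).lt_top) θ (fun ξ => χ ‖ξ‖) cn c₀
        hcn_pos.le hc₀.le ((inner ℝ x (v k) : ℝ) + t * φ (v k)) hInt hphase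
        (fun ξ hξ => hχlow _ (hnorm_ball ξ (hQsubball hξ)))
      rw [hrepr, integral_indicator (hQmeas k)]
      have hP : (1/2) * c₀ * cn * (volume (Q k)).toReal
          = (1/2) * c₀ * cn * (1/(n:ℝ))^d := by rw [hQvolR]
      rw [hP] at hosc
      have hP2 : ((1/2) * c₀ * cn * ((1/(n:ℝ)))^d)^2 = c₀^2/4 * (1/(n:ℝ))^d := by
        have h1 : (n:ℝ)^d * (1/(n:ℝ))^d = 1 := by
          rw [← mul_pow, mul_one_div_cancel hnne, one_pow]
        calc ((1/2) * c₀ * cn * ((1/(n:ℝ)))^d)^2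
            = c₀^2/4 * (cn^2 * ((1/(n:ℝ))^d * (1/(n:ℝ))^d)) := by ring
          _ = c₀^2/4 * (((n:ℝ)^d * (1/(n:ℝ))^d) * (1/(n:ℝ))^d) := by rw [hcn_sq]; ring
          _ = c₀^2/4 * (1/(n:ℝ))^d := by rw [h1, one_mul]
      rw [← hP2]
      exact pow_le_pow_left₀ (by positivity) hosc 2
    -- the weights
    set ν : ℕ → ℝ := fun j => if e j ∈ S then (1:ℝ) else 0 with hνdef
    have hνval : ∀ j, ν j = if e j ∈ S then (1:ℝ) else 0 := fun j => rfl
    have hmemiff : ∀ j : ℕ, j ∈ S.image e.symm ↔ e j ∈ S := by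
      intro j
      rw [Finset.mem_image]
      constructor
      · rintro ⟨k, hk, rfl⟩
        simpa using hk
      · intro h
        exact ⟨e j, h, e.symm_apply_apply j⟩
    have hνzero : ∀ j ∉ S.image e.symm, ν j = 0 := by
      intro j hj
      rw [hνval j, if_neg (fun h => hj ((hmemiff j).mpr h))]
    have hνsum : Summable (fun j => |ν j| ^ β) := by
      apply summable_of_ne_finset_zero (s := S.image e.symm)
      intro j hj
      rw [hνzero j hj, abs_zero, Real.zero_rpow (by linarith)]
    have hcardim : (S.image e.symm).card = m^d := by
      rw [Finset.card_image_of_injective _ e.symm.injective, hScard]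
    have hνtsum : (∑' j, |ν j| ^ β) = ((m:ℝ))^d := by
      rw [tsum_eq_sum (s := S.image e.symm)
        (fun j hj => by rw [hνzero j hj, abs_zero, Real.zero_rpow (by linarith)])]
      have hone : ∀ j ∈ S.image e.symm, |ν j|^β = 1 := by
        intro j hj
        rw [hνval j, if_pos ((hmemiff j).mp hj), abs_one, Real.one_rpow]
      rw [Finset.sum_congr rfl hone, Finset.sum_const, hcardim]
      push_cast
      ring
    -- assemble: lower bound for the mixed norm
    set F : ℝ → EuclideanSpace ℝ (Fin d) → ℝ := fun t x => ∑' j, ν j *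
      ‖∫ ξ : EuclideanSpace ℝ (Fin d),
        Complex.exp (Complex.I * Complex.ofReal ((inner ℝ x ξ : ℝ) + t * φ ξ)) *
          (χ ‖ξ‖ : ℂ) * g j ξ‖ ^ 2 with hFdef
    have hνnn : ∀ j, 0 ≤ ν j := by
      intro j
      rw [hνval j]
      split <;> norm_num
    have hF : ∀ t x, 0 ≤ F t x := by
      intro t x
      apply tsum_nonneg
      intro j
      exact mul_nonneg (hνnn j) (by positivity)
    have hlowF : ∀ t ∈ Set.Icc (0:ℝ) (a*n), ∀ x ∈ X, κ ≤ F t x := by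
      intro t ht x hx
      have hFsum : Summable (fun j => ν j *
          ‖∫ ξ : EuclideanSpace ℝ (Fin d),
            Complex.exp (Complex.I * Complex.ofReal ((inner ℝ x ξ : ℝ) + t * φ ξ)) *
              (χ ‖ξ‖ : ℂ) * g j ξ‖ ^ 2) := by
        apply summable_of_ne_finset_zero (s := S.image e.symm)
        intro j hj
        rw [hνzero j hj, zero_mul]
      have hterm : ∀ j ∈ S.image e.symm, c₀^2/4 * (1/(n:ℝ))^d ≤ ν j *
          ‖∫ ξ : EuclideanSpace ℝ (Fin d),
            Complex.exp (Complex.I * Complex.ofReal ((inner ℝ x ξ : ℝ) + t * φ ξ)) *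
              (χ ‖ξ‖ : ℂ) * g j ξ‖ ^ 2 := by
        intro j hj
        have hjS := (hmemiff j).mp hj
        rw [hνval j, if_pos hjS, one_mul]
        exact hA t ht x hx j hjS
      have hstep1 : ((m:ℝ))^d * (c₀^2/4 * (1/(n:ℝ))^d) ≤ F t x := by
        calc ((m:ℝ))^d * (c₀^2/4 * (1/(n:ℝ))^d)
            = ((S.image e.symm).card : ℝ) * (c₀^2/4 * (1/(n:ℝ))^d) := by
              rw [hcardim]; push_cast; ring
          _ ≤ ∑ j ∈ S.image e.symm, ν j *
              ‖∫ ξ : EuclideanSpace ℝ (Fin d),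
                Complex.exp (Complex.I * Complex.ofReal ((inner ℝ x ξ : ℝ) + t * φ ξ)) *
                  (χ ‖ξ‖ : ℂ) * g j ξ‖ ^ 2 := by
              have := Finset.card_nsmul_le_sum (S.image e.symm) _ _ hterm
              rw [nsmul_eq_mul] at this
              exact this
          _ ≤ F t x := by
              rw [hFdef]
              exact Summable.sum_le_tsum _ (fun j _ => mul_nonneg (hνnn j) (by positivity)) hFsum
      refine le_trans ?_ hstep1
      have hmn : ρ/2 ≤ (m:ℝ) * (1/n) := by
        rw [mul_one_div, div_le_div_iff₀ (by norm_num : (0:ℝ) < 2) hn0]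
        linarith
      have hpow : (ρ/2)^d ≤ ((m:ℝ))^d * (1/(n:ℝ))^d := by
        rw [← mul_pow]
        exact pow_le_pow_left₀ (by positivity) hmn d
      rw [hκdef]
      calc c₀^2/4 * (ρ/2)^d ≤ c₀^2/4 * (((m:ℝ))^d * (1/(n:ℝ))^d) :=
            mul_le_mul_of_nonneg_left hpow (by positivity)
        _ = ((m:ℝ))^d * (c₀^2/4 * (1/(n:ℝ))^d) := by ring
    -- apply the hypothesis and the mixed-norm lower bound
    have hupper := hest g hgmem horth ν hνsum
    have hlower := mixedNorm_lower volume (q/2) (r/2) (by linarith) (by linarith)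
      F hF (a*n) X hXmeas κ hκpos.le hlowF
    rw [hνtsum] at hupper
    have hq2 : ENNReal.ofReal (q/2) = ENNReal.ofReal (q/2) := rfl
    have hchain : ((ENNReal.ofReal κ * volume X ^ (1/(r/2))) ^ (q/2) * ENNReal.ofReal (a*n)) ^ (1/(q/2))
        ≤ ENNReal.ofReal (C * (((m:ℝ))^d) ^ (1/β)) := le_trans hlower hupper
    -- convert to a real inequality
    set Lraw : ℝ := ((κ * (((b*n))^d)^(1/(r/2)))^(q/2) * (a*n))^(1/(q/2)) with hLdef
    have hbn : (0:ℝ) < b*n := by positivity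
    have hLpos : 0 < Lraw := by
      rw [hLdef]
      positivity
    have hconv : ((ENNReal.ofReal κ * volume X ^ (1/(r/2))) ^ (q/2) * ENNReal.ofReal (a*n)) ^ (1/(q/2))
        = ENNReal.ofReal Lraw := by
      rw [hXvol, ← ENNReal.ofReal_pow hbn.le,
        ENNReal.ofReal_rpow_of_nonneg (by positivity) (by positivity),
        ← ENNReal.ofReal_mul hκpos.le,
        ENNReal.ofReal_rpow_of_nonneg (by positivity) (by positivity),
        ← ENNReal.ofReal_mul (by positivity),
        ENNReal.ofReal_rpow_of_nonneg (by positivity) (by positivity), hLdef]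
    rw [hconv] at hchain
    have hreal : Lraw ≤ C * (((m:ℝ))^d) ^ (1/β) := by
      rcases ENNReal.ofReal_le_ofReal_iff'.mp hchain with h | h
      · exact h
      · linarith
    -- simplify Lraw
    have hr2 : 1/(r/2) = 2/r := by
      field_simp
    have hq2' : 1/(q/2) = 2/q := by
      field_simp
    have hLeq : Lraw = κ * (b*n)^((2:ℝ)*d/r) * (a*n)^((2:ℝ)/q) := by
      rw [hLdef, hr2, hq2']
      rw [← Real.rpow_natCast (b*n) d]
      rw [← Real.rpow_mul hbn.le]
      rw [Real.mul_rpow hκpos.le (Real.rpow_nonneg hbn.le _)]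
      rw [← Real.rpow_mul hbn.le]
      rw [Real.mul_rpow (mul_nonneg (Real.rpow_nonneg hκpos.le _) (Real.rpow_nonneg hbn.le _))
        (by positivity : (0:ℝ) ≤ a*n)]
      rw [Real.mul_rpow (Real.rpow_nonneg hκpos.le _) (Real.rpow_nonneg hbn.le _)]
      rw [← Real.rpow_mul hκpos.le, ← Real.rpow_mul hbn.le]
      rw [show q/2*(2/q) = 1 from by field_simp]
      rw [show (d:ℝ)*(2/r)*(q/2)*(2/q) = 2*d/r from by field_simp]
      rw [Real.rpow_one]
    -- final comparison
    have hCpos : 0 < C := by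
      by_contra hC
      push_neg at hC
      have hmd : (0:ℝ) ≤ (((m:ℝ))^d) ^ (1/β) := Real.rpow_nonneg (by positivity) _
      have hneg : C * (((m:ℝ))^d) ^ (1/β) ≤ 0 := mul_nonpos_of_nonpos_of_nonneg hC hmd
      exact absurd (hreal.trans hneg) (not_le.mpr hLpos)
    have hrhs : C * (((m:ℝ))^d) ^ (1/β) ≤ C * (ρ*n)^γ := by
      apply mul_le_mul_of_nonneg_left _ hCpos.le
      rw [← Real.rpow_natCast (m:ℝ) d, ← Real.rpow_mul (by positivity)]
      rw [hγdef]
      have : (d:ℝ) * (1/β) = d/β := by ring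
      rw [this]
      apply Real.rpow_le_rpow (by positivity) hm_le (by positivity)
    have hlhs : κ * (b*n)^α ≤ Lraw := by
      rw [hLeq, hαdef]
      rw [Real.rpow_add hbn]
      have hble : b*n ≤ a*n := by
        have hba : b ≤ a := by
          rw [hbdef, div_le_iff₀ hd0]
          exact le_mul_of_one_le_right hapos.le hd1
        exact mul_le_mul_of_nonneg_right hba hn0.le
      have hmono : (b*n)^((2:ℝ)/q) ≤ (a*n)^((2:ℝ)/q) :=
        Real.rpow_le_rpow hbn.le hble (by positivity)
      have hbb : (0:ℝ) ≤ (b*n)^((2:ℝ)*d/r) := (Real.rpow_nonneg hbn.le _)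
      calc κ * ((b*n)^((2:ℝ)/q) * (b*n)^(2*(d:ℝ)/r))
          ≤ κ * ((a*n)^((2:ℝ)/q) * (b*n)^(2*(d:ℝ)/r)) := by
            apply mul_le_mul_of_nonneg_left _ hκpos.le
            exact mul_le_mul_of_nonneg_right hmono hbb
        _ = κ * (b*n)^((2:ℝ)*d/r) * (a*n)^((2:ℝ)/q) := by ring
    calc κ * (b*n)^α ≤ Lraw := hlhs
      _ ≤ C * (((m:ℝ))^d) ^ (1/β) := hreal
      _ ≤ C * (ρ*n)^γ := hrhs
  -- asymptotic contradiction
  set ε : ℝ := α - γ with hεdef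
  have hε : 0 < ε := by rw [hεdef]; linarith
  set D : ℝ := C * ρ^γ / (κ * b^α) with hDdef
  have hev1 : ∀ᶠ n : ℕ in Filter.atTop, D < (n:ℝ)^ε :=
    ((tendsto_rpow_atTop hε).comp tendsto_natCast_atTop_atTop).eventually_gt_atTop D
  have hev2 : ∀ᶠ n : ℕ in Filter.atTop, max 1 (max (2*d/δ') (2/ρ)) ≤ (n:ℝ) :=
    tendsto_natCast_atTop_atTop.eventually_ge_atTop _
  obtain ⟨n, h1, h2⟩ := (hev1.and hev2).exists
  have hn1 : (1:ℝ) ≤ n := le_trans (le_max_left _ _) h2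
  have hn0 : (0:ℝ) < n := by linarith
  have hmain := main n h2
  have hexp : ((b*n):ℝ)^α = b^α * (n:ℝ)^α := Real.mul_rpow hbpos.le hn0.le
  have hexp2 : ((ρ*n):ℝ)^γ = ρ^γ * (n:ℝ)^γ := Real.mul_rpow hρpos.le hn0.le
  have hexp3 : (n:ℝ)^α = (n:ℝ)^γ * (n:ℝ)^ε := by
    rw [hεdef, ← Real.rpow_add hn0]; ring_nf
  rw [hexp, hexp2, hexp3] at hmain
  have hnγ : (0:ℝ) < (n:ℝ)^γ := Real.rpow_pos_of_pos hn0 _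
  have hstep : κ * b^α * (n:ℝ)^ε ≤ C * ρ^γ := by
    have := hmain
    have h3 : κ * b^α * (n:ℝ)^ε * (n:ℝ)^γ ≤ C * ρ^γ * (n:ℝ)^γ := by ring_nf; ring_nf at this; linarith
    exact le_of_mul_le_mul_right h3 hnγ
  have hbα : (0:ℝ) < κ * b^α := by positivity
  have : (n:ℝ)^ε ≤ D := by
    rw [hDdef, le_div_iff₀ hbα]
    linarith [hstep]
  linarith
end

section
/- The family f_j := c e^{-ijφ(D)} g, j ∈ ℤ, is orthonormal in L²(ℝ^d) for an appropriate constant c > 0, where φ(ξ) = φ₀(|ξ|) with φ₀ increasing and C¹ away from 0, and ĝ(ξ) = 1_{[φ₀^{-1}(ℓπ), φ₀^{-1}((ℓ+2)π)]}(|ξ|) |ξ|^{-(d-1)/2} φ₀'(|ξ|)^{1/2} for a fixed integer ℓ. -/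
/-!
Passing to polar coordinates, `|ĝ(ξ)|² dξ` becomes `φ₀'(r) dr` on `[a, b]` (the weight
`r^{-(d-1)/2}` cancels the Jacobian `r^{d-1}`), so the substitution `s = φ₀(r)` turns
`⟨f_j, f_k⟩` into a multiple of `∫_{ℓπ}^{(ℓ+2)π} e^{i(j-k)s} ds`, which vanishes for `j ≠ k`
because the interval is a full period.
-/

open MeasureTheory Complex Set
open scoped Real

lemma integral_exp_int_mul_I_period (x : ℝ) (m : ℤ) :
    ∫ s in x..x + 2 * π, exp (I * m * s) = if m = 0 then ((2 * π : ℝ) : ℂ) else 0 := by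
  split_ifs with hm
  · simp [hm]
  · have hIm : I * m ≠ 0 := by simp [hm]
    rw [integral_exp_mul_complex hIm]
    push_cast
    rw [show I * m * (x + 2 * π) = I * m * x + m * (2 * π * I) by ring, exp_add,
      exp_int_mul_two_pi_mul_I, mul_one, sub_self, zero_div]

lemma ContDiffOn.intervalIntegral_deriv_smul_comp {E : Type*} [NormedAddCommGroup E]
    [NormedSpace ℝ E] {f : ℝ → ℝ} {g : ℝ → E} {s : Set ℝ} {a b : ℝ}
    (hf : ContDiffOn ℝ 1 f s) (hs : IsOpen s) (hab : uIcc a b ⊆ s) (hg : Continuous g) :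
    ∫ x in a..b, deriv f x • g (f x) = ∫ u in f a..f b, g u :=
  intervalIntegral.integral_deriv_smul_comp
    (fun _ hx ↦ ((hf.differentiableOn one_ne_zero).differentiableAt
      (hs.mem_nhds (hab hx))).hasDerivAt)
    ((hf.continuousOn_deriv_of_isOpen hs le_rfl).mono hab) hg

lemma pow_pred_mul_sq_rpow_mul_sqrt {d : ℕ} (hd : 1 ≤ d) {y u : ℝ} (hy : 0 < y) (hu : 0 ≤ u) :
    y ^ (d - 1) * (y ^ (-((d : ℝ) - 1) / 2) * √u) ^ 2 = u := by
  obtain ⟨n, rfl⟩ := Nat.exists_eq_add_of_le' hd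
  push_cast
  rw [mul_pow, Real.sq_sqrt hu, ← Real.rpow_natCast (y ^ _), ← Real.rpow_mul hy.le, ← mul_assoc,
    ← Real.rpow_natCast y n, ← Real.rpow_add hy]
  norm_num

lemma integral_norm_addHaar_of_support_subset_Icc {E F : Type*} [NormedAddCommGroup E]
    [NormedSpace ℝ E] [MeasurableSpace E] [BorelSpace E] [FiniteDimensional ℝ E] [Nontrivial E]
    [NormedAddCommGroup F] [NormedSpace ℝ F] (μ : Measure E) [μ.IsAddHaarMeasure]
    {f : ℝ → F} {a b : ℝ} (ha : 0 < a) (hab : a ≤ b) (hf : Function.support f ⊆ Icc a b) :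
    ∫ x, f ‖x‖ ∂μ = Module.finrank ℝ E • μ.real (Metric.ball 0 1) •
      ∫ y in a..b, y ^ (Module.finrank ℝ E - 1) • f y := by
  rw [integral_fun_norm_addHaar, intervalIntegral.integral_of_le hab,
    ← integral_Icc_eq_integral_Ioc,
    setIntegral_eq_of_subset_of_forall_sdiff_eq_zero measurableSet_Ioi
      (fun y (hy : y ∈ Icc a b) ↦ ha.trans_le hy.1)]
  intro y hy
  rw [Function.notMem_support.1 (fun h ↦ hy.2 (hf h)), smul_zero]

lemma conj_mul_exp_neg_I_mul (c r u : ℝ) (j k : ℤ) :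
    (starRingEnd ℂ) (c * exp (-I * j * r) * u) * (c * exp (-I * k * r) * u)
      = (c : ℂ) ^ 2 * (exp (I * (j - k : ℤ) * r) * (u : ℂ) ^ 2) := by
  simp only [map_mul, ← exp_conj, conj_ofReal, map_neg, conj_I, map_intCast]
  push_cast
  rw [show I * (j - k) * r = -(-I) * j * r + -I * k * r by ring, exp_add]
  ring

noncomputable def radialProfile (d : ℕ) (φ₀ : ℝ → ℝ) (a b : ℝ) : ℝ → ℝ :=
  (Icc a b).indicator fun s ↦ s ^ (-((d : ℝ) - 1) / 2) * √(deriv φ₀ s)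

section radialProfile

variable {d : ℕ} {φ₀ : ℝ → ℝ} {a b : ℝ}

lemma support_radialProfile : Function.support (radialProfile d φ₀ a b) ⊆ Icc a b :=
  support_indicator_subset

lemma pow_pred_mul_radialProfile_sq (hd : 1 ≤ d) (ha : 0 < a) {y : ℝ} (hy : y ∈ Icc a b)
    (hφ₀y : 0 ≤ deriv φ₀ y) : y ^ (d - 1) * radialProfile d φ₀ a b y ^ 2 = deriv φ₀ y := by
  rw [radialProfile, indicator_of_mem hy, pow_pred_mul_sq_rpow_mul_sqrt hd (ha.trans_le hy.1) hφ₀y]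

lemma integral_conj_mul_radialProfile {ℓ : ℤ} (hd : 1 ≤ d) (ha : 0 < a) (hab : a ≤ b)
    (hφa : φ₀ a = ℓ * π) (hφb : φ₀ b = (ℓ + 2) * π) (hφ₀C1 : ContDiffOn ℝ 1 φ₀ (Ioi 0))
    (hφ₀deriv : ∀ s ∈ Ioi (0 : ℝ), 0 ≤ deriv φ₀ s) (c : ℝ) (j k : ℤ) :
    ∫ ξ : EuclideanSpace ℝ (Fin d),
        (starRingEnd ℂ) (c * exp (-I * j * φ₀ ‖ξ‖) * radialProfile d φ₀ a b ‖ξ‖) *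
          (c * exp (-I * k * φ₀ ‖ξ‖) * radialProfile d φ₀ a b ‖ξ‖)
      = c ^ 2 * (d • volume.real (Metric.ball (0 : EuclideanSpace ℝ (Fin d)) 1) •
          if j = k then ((2 * π : ℝ) : ℂ) else 0) := by
  have : Nontrivial (EuclideanSpace ℝ (Fin d)) :=
    Module.nontrivial_of_finrank_pos (R := ℝ) (by rw [finrank_euclideanSpace_fin]; omega)
  set ψ : ℝ → ℂ := fun r ↦ exp (I * (j - k : ℤ) * φ₀ r) * (radialProfile d φ₀ a b r : ℂ) ^ 2
  have hψ : Function.support ψ ⊆ Icc a b := fun r hr ↦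
    support_radialProfile (show radialProfile d φ₀ a b r ≠ 0 from fun h0 ↦ hr (by simp [ψ, h0]))
  have hpos : uIcc a b ⊆ Ioi 0 := fun y hy ↦ ha.trans_le (uIcc_of_le hab ▸ hy).1
  have hweight : EqOn (fun y ↦ y ^ (d - 1) • ψ y)
      (fun y ↦ deriv φ₀ y • exp (I * (j - k : ℤ) * φ₀ y)) (uIcc a b) := fun y hy ↦ by
    simp only [ψ, Complex.real_smul, ← pow_pred_mul_radialProfile_sq hd ha
      (uIcc_of_le hab ▸ hy) (hφ₀deriv y (hpos hy))]
    push_cast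
    ring
  calc _ = ∫ ξ : EuclideanSpace ℝ (Fin d), (c : ℂ) ^ 2 * ψ ‖ξ‖ :=
        integral_congr_ae (.of_forall fun ξ ↦ conj_mul_exp_neg_I_mul _ _ _ j k)
    _ = _ := by
      rw [integral_const_mul, integral_norm_addHaar_of_support_subset_Icc _ ha hab hψ,
        finrank_euclideanSpace_fin, intervalIntegral.integral_congr hweight,
        hφ₀C1.intervalIntegral_deriv_smul_comp isOpen_Ioi hpos
          (g := fun s : ℝ ↦ exp (I * (j - k : ℤ) * s)) (by fun_prop), hφa, hφb, add_mul,
        integral_exp_int_mul_I_period]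
      simp only [sub_eq_zero]

end radialProfile

theorem time_translated_family_orthonormal_general (d : ℕ) (hd : 1 ≤ d)
    (φ₀ : ℝ → ℝ) (a b : ℝ) (ha : 0 < a) (hab : a < b) (ℓ : ℤ)
    (hφa : φ₀ a = ℓ * Real.pi) (hφb : φ₀ b = (ℓ + 2) * Real.pi)
    (hφ₀C1 : ContDiffOn ℝ 1 φ₀ (Set.Ioi 0))
    (hφ₀deriv : ∀ s ∈ Set.Ioi (0 : ℝ), 0 ≤ deriv φ₀ s) :
    ∃ c : ℝ, 0 < c ∧ ∀ j k : ℤ,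
      (∫ ξ : EuclideanSpace ℝ (Fin d),
        (starRingEnd ℂ)
            ((c : ℂ) * Complex.exp (-(Complex.I) * (j : ℂ) * Complex.ofReal (φ₀ ‖ξ‖)) *
              Complex.ofReal (Set.indicator (Set.Icc a b)
                (fun s => s ^ (-((d : ℝ) - 1) / 2) * Real.sqrt (deriv φ₀ s)) ‖ξ‖)) *
          ((c : ℂ) * Complex.exp (-(Complex.I) * (k : ℂ) * Complex.ofReal (φ₀ ‖ξ‖)) *
            Complex.ofReal (Set.indicator (Set.Icc a b)
              (fun s => s ^ (-((d : ℝ) - 1) / 2) * Real.sqrt (deriv φ₀ s)) ‖ξ‖)))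
        = if j = k then 1 else 0 := by
  set V := volume.real (Metric.ball (0 : EuclideanSpace ℝ (Fin d)) 1) with hV_def
  have hV : 0 < V :=
    ENNReal.toReal_pos (Metric.measure_ball_pos _ _ one_pos).ne' measure_ball_lt_top.ne
  refine ⟨√(d * V * (2 * π))⁻¹, by positivity, fun j k ↦ ?_⟩
  refine (integral_conj_mul_radialProfile hd ha hab.le hφa hφb hφ₀C1 hφ₀deriv _ j k).trans ?_
  rw [← hV_def]
  split_ifs
  · have hd0 : (d : ℂ) ≠ 0 := Nat.cast_ne_zero.2 (by omega)
    have hV0 : (V : ℂ) ≠ 0 := ofReal_ne_zero.2 hV.ne'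
    rw [← ofReal_pow, Real.sq_sqrt (by positivity), nsmul_eq_mul, real_smul]
    push_cast
    field_simp
  · simp

/-- The family `f_j = c e^{-ijφ(D)} g`, `j ∈ ℤ`, is orthonormal in `L²(ℝ^d)` for an
appropriate constant `c > 0`, where `φ(ξ) = φ₀(|ξ|)` with `φ₀` increasing and `C¹`
away from `0`, and
`ĝ(ξ) = 1_{[φ₀^{-1}(ℓπ), φ₀^{-1}((ℓ+2)π)]}(|ξ|) |ξ|^{-(d-1)/2} φ₀'(|ξ|)^{1/2}`.
The statement is written on the frequency side: `f̂_j(ξ) = c e^{-ijφ₀(|ξ|)} ĝ(ξ)`, and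
orthonormality reads `∫ conj(f̂_j) f̂_k = δ_{jk}` (after normalizing Plancherel's
constant into `c`). -/
theorem time_translated_family_orthonormal (d : ℕ) (hd : 1 ≤ d)
    (φ₀ : ℝ → ℝ) (a b : ℝ) (ha : 0 < a) (hab : a < b) (ℓ : ℤ)
    (hφa : φ₀ a = ℓ * Real.pi) (hφb : φ₀ b = (ℓ + 2) * Real.pi)
    (hφ₀C1 : ContDiffOn ℝ 1 φ₀ (Set.Ioi 0))
    (hφ₀mono : StrictMonoOn φ₀ (Set.Ioi 0))
    (hφ₀deriv : ∀ s ∈ Set.Ioi (0 : ℝ), 0 ≤ deriv φ₀ s) :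
    ∃ c : ℝ, 0 < c ∧ ∀ j k : ℤ,
      (∫ ξ : EuclideanSpace ℝ (Fin d),
        (starRingEnd ℂ)
            ((c : ℂ) * Complex.exp (-(Complex.I) * (j : ℂ) * Complex.ofReal (φ₀ ‖ξ‖)) *
              Complex.ofReal (Set.indicator (Set.Icc a b)
                (fun s => s ^ (-((d : ℝ) - 1) / 2) * Real.sqrt (deriv φ₀ s)) ‖ξ‖)) *
          ((c : ℂ) * Complex.exp (-(Complex.I) * (k : ℂ) * Complex.ofReal (φ₀ ‖ξ‖)) *
            Complex.ofReal (Set.indicator (Set.Icc a b)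
              (fun s => s ^ (-((d : ℝ) - 1) / 2) * Real.sqrt (deriv φ₀ s)) ‖ξ‖)))
        = if j = k then 1 else 0 :=
  time_translated_family_orthonormal_general d hd φ₀ a b ha hab ℓ hφa hφb hφ₀C1 hφ₀deriv
end
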